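/- Let r > 0, let q ∈ ℝ³ be nonzero with ‖q‖ < 2r, let e_r = q/‖q‖, and let n ∈ ℝ³ be a unit vector with cos θ = nᵀe_r. For any perturbation δq = ξ₁·e_r + w where w is orthogonal to q and ‖δq‖ ≤ σ, the change of the hyperplane coordinate in direction n of the flipped point satisfies nᵀ(DF(q)(δq)) = −ξ₁·cos θ + ((2r − ‖q‖)/‖q‖)·nᵀw, and the tangential contribution is bounded by |nᵀw| ≤ σ·√(1 − cos²θ); in particular nᵀ(DF(q)(δq)) ≤ |ξ₁|·|cos θ| + ((2r − ‖q‖)/‖q‖)·σ·√(1 − cos²θ). -/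

import Mathlib

/-! Write `e = q/‖q‖`. Since `q ⟂ w`, the derivative acts on `ξ • e + w` diagonally,
`DF(q)(ξ • e + w) = -ξ • e + ((2r - ‖q‖)/‖q‖) • w`, which gives the identity. For the bound,
only the component `n - ⟪n, e⟫ • e` of `n` orthogonal to `e` pairs with `w`; it has length
`√(1 - cos²θ)`, and Pythagoras gives `‖w‖ ≤ ‖ξ • e + w‖ ≤ σ`. -/

open scoped RealInnerProductSpace

/-- The Fréchet derivative of the spherical flipping map `F(q) = 2r·q/‖q‖ − q` at `q`,
as a map on vectors: `v ↦ (2r/‖q‖)·v − (2r/‖q‖³)·(qᵀv)·q − v`. -/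
noncomputable def flipDeriv (r : ℝ) (q v : EuclideanSpace ℝ (Fin 3)) :
    EuclideanSpace ℝ (Fin 3) :=
  (2 * r / ‖q‖) • v - ((2 * r / ‖q‖ ^ 3) * ⟪q, v⟫) • q - v

section InnerProductSpace

variable {E : Type*} [NormedAddCommGroup E] [InnerProductSpace ℝ E]

theorem norm_le_norm_add_of_inner_eq_zero {v w : E} (h : ⟪v, w⟫ = 0) : ‖w‖ ≤ ‖v + w‖ := by
  have hsq : ‖w‖ ^ 2 ≤ ‖v + w‖ ^ 2 := by
    rw [norm_add_sq_real, h]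
    nlinarith [sq_nonneg ‖v‖]
  exact (pow_le_pow_iff_left₀ (norm_nonneg _) (norm_nonneg _) two_ne_zero).mp hsq

theorem norm_sub_inner_smul_sq {e : E} (he : ‖e‖ = 1) (n : E) :
    ‖n - ⟪n, e⟫ • e‖ ^ 2 = ‖n‖ ^ 2 - ⟪n, e⟫ ^ 2 := by
  rw [norm_sub_sq_real, real_inner_smul_right, norm_smul, he, mul_one, Real.norm_eq_abs, sq_abs]
  ring

theorem abs_inner_le_norm_mul_sqrt_one_sub_inner_sq {e n w : E} (he : ‖e‖ = 1) (hn : ‖n‖ = 1)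
    (hw : ⟪e, w⟫ = 0) : |⟪n, w⟫| ≤ ‖w‖ * √(1 - ⟪n, e⟫ ^ 2) := by
  have hproj : ⟪n, w⟫ = ⟪n - ⟪n, e⟫ • e, w⟫ := by
    rw [inner_sub_left, real_inner_smul_left, hw, mul_zero, sub_zero]
  have hnorm : ‖n - ⟪n, e⟫ • e‖ = √(1 - ⟪n, e⟫ ^ 2) := by
    rw [← one_pow 2, ← hn, ← norm_sub_inner_smul_sq he, Real.sqrt_sq (norm_nonneg _)]
  calc |⟪n, w⟫| ≤ ‖n - ⟪n, e⟫ • e‖ * ‖w‖ := hproj ▸ abs_real_inner_le_norm _ _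
    _ = ‖w‖ * √(1 - ⟪n, e⟫ ^ 2) := by rw [hnorm, mul_comm]

end InnerProductSpace

theorem flipDeriv_smul_add_of_inner_eq_zero (r : ℝ) {q w : EuclideanSpace ℝ (Fin 3)}
    (hq : q ≠ 0) (hw : ⟪q, w⟫ = 0) (ξ : ℝ) :
    flipDeriv r q (ξ • (‖q‖⁻¹ • q) + w) = (-ξ) • (‖q‖⁻¹ • q) + ((2 * r - ‖q‖) / ‖q‖) • w := by
  have hq0 : ‖q‖ ≠ 0 := norm_ne_zero_iff.mpr hq
  rw [flipDeriv, inner_add_right, real_inner_smul_right, real_inner_smul_right,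
    real_inner_self_eq_norm_sq, hw, add_zero]
  match_scalars <;> field_simp
  ring

theorem stmt_4_general (r : ℝ) (q : EuclideanSpace ℝ (Fin 3)) (hq : q ≠ 0)
    (hq2r : ‖q‖ < 2 * r)
    (er : EuclideanSpace ℝ (Fin 3)) (her : er = ‖q‖⁻¹ • q)
    (n : EuclideanSpace ℝ (Fin 3)) (hn : ‖n‖ = 1)
    (cosθ : ℝ) (hcos : cosθ = ⟪n, er⟫)
    (ξ₁ : ℝ) (w : EuclideanSpace ℝ (Fin 3)) (hw : ⟪q, w⟫ = 0)
    (σ : ℝ) (hσ : ‖ξ₁ • er + w‖ ≤ σ) :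
    ⟪n, flipDeriv r q (ξ₁ • er + w)⟫
      = -ξ₁ * cosθ + (2 * r - ‖q‖) / ‖q‖ * ⟪n, w⟫ ∧
    |⟪n, w⟫| ≤ σ * Real.sqrt (1 - cosθ ^ 2) ∧
    ⟪n, flipDeriv r q (ξ₁ • er + w)⟫
      ≤ |ξ₁| * |cosθ| + (2 * r - ‖q‖) / ‖q‖ * (σ * Real.sqrt (1 - cosθ ^ 2)) := by
  subst her hcos
  have hid : ⟪n, flipDeriv r q (ξ₁ • (‖q‖⁻¹ • q) + w)⟫
      = -ξ₁ * ⟪n, ‖q‖⁻¹ • q⟫ + (2 * r - ‖q‖) / ‖q‖ * ⟪n, w⟫ := by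
    simp only [flipDeriv_smul_add_of_inner_eq_zero r hq hw, inner_add_right,
      real_inner_smul_right]
  have hwe : ⟪‖q‖⁻¹ • q, w⟫ = 0 := by rw [real_inner_smul_left, hw, mul_zero]
  have hwσ : ‖w‖ ≤ σ :=
    (norm_le_norm_add_of_inner_eq_zero (by rw [real_inner_smul_left, hwe, mul_zero])).trans hσ
  have hbound : |⟪n, w⟫| ≤ σ * √(1 - ⟪n, ‖q‖⁻¹ • q⟫ ^ 2) :=
    (abs_inner_le_norm_mul_sqrt_one_sub_inner_sq (norm_smul_inv_norm hq) hn hwe).trans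
      (mul_le_mul_of_nonneg_right hwσ (Real.sqrt_nonneg _))
  refine ⟨hid, hbound, hid ▸ add_le_add ?_ ?_⟩
  · rw [neg_mul, ← abs_mul]
    exact neg_le_abs _
  · exact mul_le_mul_of_nonneg_left ((le_abs_self _).trans hbound)
      (div_nonneg (by linarith) (norm_nonneg q))

theorem stmt_4 (r : ℝ) (hr : 0 < r) (q : EuclideanSpace ℝ (Fin 3)) (hq : q ≠ 0)
    (hq2r : ‖q‖ < 2 * r)
    (er : EuclideanSpace ℝ (Fin 3)) (her : er = ‖q‖⁻¹ • q)
    (n : EuclideanSpace ℝ (Fin 3)) (hn : ‖n‖ = 1)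
    (cosθ : ℝ) (hcos : cosθ = ⟪n, er⟫)
    (ξ₁ : ℝ) (w : EuclideanSpace ℝ (Fin 3)) (hw : ⟪q, w⟫ = 0)
    (σ : ℝ) (hσ : ‖ξ₁ • er + w‖ ≤ σ) :
    ⟪n, flipDeriv r q (ξ₁ • er + w)⟫
      = -ξ₁ * cosθ + (2 * r - ‖q‖) / ‖q‖ * ⟪n, w⟫ ∧
    |⟪n, w⟫| ≤ σ * Real.sqrt (1 - cosθ ^ 2) ∧
    ⟪n, flipDeriv r q (ξ₁ • er + w)⟫
      ≤ |ξ₁| * |cosθ| + (2 * r - ‖q‖) / ‖q‖ * (σ * Real.sqrt (1 - cosθ ^ 2)) :=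
  stmt_4_general r q hq hq2r er her n hn cosθ hcos ξ₁ w hw σ hσ
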